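/- arXiv:2605.26009 — 2 statements merged into one kernel-verified Lean document; each statement's English description precedes it below -/
import Mathlib

section
/- Let R be a reduced word for w ∈ S_n. Then for every x ∈ S_n, the weight wt_R(x) is a nonzero polynomial in ℤ[q] if and only if x ≤ w in the Bruhat order; equivalently, if and only if x = w(T) for some subword T of R. In particular, the support of 𝔓_{R,q} is exactly the Bruhat interval {x ∈ S_n : x ≤ w}. -/
open scoped Classical

namespace BSDist

/-- The simple transposition `s i` (1-indexed): it swaps the values `i` and `i+1`
of `{1,…,n}`, i.e. the elements `i-1` and `i` of `Fin n`.  Out-of-range letters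
give the identity. -/
def sTr (n : ℕ) (i : ℕ) : Equiv.Perm (Fin n) :=
  if h : 1 ≤ i ∧ i < n then Equiv.swap ⟨i - 1, by omega⟩ ⟨i, h.2⟩ else 1

/-- The product `w(R) = s_{i₁} ⋯ s_{i_L}` of a word. -/
def wprod (n : ℕ) (R : List ℕ) : Equiv.Perm (Fin n) := (R.map (sTr n)).prod

/-- The Coxeter length of a permutation: its number of inversions. -/
def len {n : ℕ} (w : Equiv.Perm (Fin n)) : ℕ :=
  (Finset.univ.filter (fun p : Fin n × Fin n => p.1 < p.2 ∧ w p.2 < w p.1)).card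

/-- A word over the alphabet `{1,…,n-1}`. -/
def Alphabet (n : ℕ) (R : List ℕ) : Prop := ∀ i ∈ R, 1 ≤ i ∧ i < n

/-- `R` is a reduced word (over the alphabet `{1,…,n-1}`). -/
def IsReducedWord (n : ℕ) (R : List ℕ) : Prop :=
  Alphabet n R ∧ R.length = len (wprod n R)

/-- `R` is a reduced word for `w`. -/
def IsReducedWordFor (n : ℕ) (R : List ℕ) (w : Equiv.Perm (Fin n)) : Prop :=
  IsReducedWord n R ∧ wprod n R = w

/-- The weight `wt_R : S_n → ℤ[q]`, defined by the recursion
`wt_∅(e) = 1`, `wt_∅(x) = 0` for `x ≠ e`, and for an appended letter `i`: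
`wt_{Ri}(x) = wt_R(x) + wt_R(x sᵢ)` if `ℓ(x sᵢ) > ℓ(x)`, and
`wt_{Ri}(x) = q·wt_R(x) + q·wt_R(x sᵢ)` if `ℓ(x sᵢ) < ℓ(x)`. -/
noncomputable def wt (n : ℕ) (R : List ℕ) : Equiv.Perm (Fin n) → Polynomial ℤ :=
  R.foldl
    (fun f i x =>
      if len x < len (x * sTr n i) then f x + f (x * sTr n i)
      else Polynomial.X * f x + Polynomial.X * f (x * sTr n i))
    (fun x => if x = 1 then 1 else 0)

/-- A single commutation move: replace a consecutive factor `ij` by `ji` where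
`|i - j| > 1`. -/
def CommMove (R R' : List ℕ) : Prop :=
  ∃ (A B : List ℕ) (i j : ℕ), (i + 1 < j ∨ j + 1 < i) ∧
    R = A ++ [i, j] ++ B ∧ R' = A ++ [j, i] ++ B

/-- Commutation equivalence: a finite sequence of commutation moves. -/
def CommEquiv (R R' : List ℕ) : Prop := Relation.ReflTransGen CommMove R R'

/-- A single braid move: replace a consecutive factor `k(k+1)k` by `(k+1)k(k+1)`. -/
def BraidMove (R R' : List ℕ) : Prop :=
  ∃ (A B : List ℕ) (k : ℕ),
    R = A ++ [k, k + 1, k] ++ B ∧ R' = A ++ [k + 1, k, k + 1] ++ B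

/-- The Demazure product of a word, computed left to right:
`w ∗ sᵢ = w sᵢ` if `ℓ(w sᵢ) > ℓ(w)`, and `w ∗ sᵢ = w` otherwise. -/
def dem (n : ℕ) (R : List ℕ) : Equiv.Perm (Fin n) :=
  R.foldl (fun w i => if len w < len (w * sTr n i) then w * sTr n i else w) 1

/-- `app w t` is the value `w(t)` in 1-indexed one-line notation:
positions and values both run through `{1,…,n}`. -/
def app {n : ℕ} (w : Equiv.Perm (Fin n)) (t : ℕ) : ℕ :=
  if h : 1 ≤ t ∧ t ≤ n then ((w ⟨t - 1, by omega⟩ : Fin n) : ℕ) + 1 else 0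

/-- `posOf x t = x⁻¹(t)`, the (1-indexed) position of the value `t` in `x`. -/
def posOf {n : ℕ} (x : Equiv.Perm (Fin n)) (t : ℕ) : ℕ := app x⁻¹ t

/-- The longest element `w₀` of `S_n` (the order-reversing permutation). -/
def w0 (n : ℕ) : Equiv.Perm (Fin n) := ⟨Fin.rev, Fin.rev, Fin.rev_rev, Fin.rev_rev⟩

/-- The value pair `(a,b)` (with `a < b`) is an inversion of `x`:
`x⁻¹(a) > x⁻¹(b)`. -/
def IsInversion {n : ℕ} (x : Equiv.Perm (Fin n)) (a b : ℕ) : Prop :=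
  posOf x b < posOf x a

/-- `tau R a b` is the first time `k` at which the pair `(a,b)` is an inversion
of the prefix product `s_{i₁} ⋯ s_{i_k}`. -/
noncomputable def tau (n : ℕ) (R : List ℕ) (a b : ℕ) : ℕ :=
  sInf {k | IsInversion (wprod n (R.take k)) a b}

/-- `T_R(a,b,c) = +1` if `τ_R(a,b) < τ_R(b,c)` and `-1` otherwise. -/
noncomputable def T (n : ℕ) (R : List ℕ) (a b c : ℕ) : ℤ :=
  if tau n R a b < tau n R b c then 1 else -1

/-- `Supp(x) = {t : pos_x(t) ≠ pos_{w₀}(t)}`. -/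
noncomputable def Supp (n : ℕ) (x : Equiv.Perm (Fin n)) : Finset ℕ :=
  (Finset.Icc 1 n).filter (fun t => posOf x t ≠ posOf (w0 n) t)

/-- `Fwd(x) = {t : pos_x(t) < pos_{w₀}(t)}`. -/
noncomputable def Fwd (n : ℕ) (x : Equiv.Perm (Fin n)) : Finset ℕ :=
  (Finset.Icc 1 n).filter (fun t => posOf x t < posOf (w0 n) t)

/-- `Bwd(x) = {t : pos_x(t) > pos_{w₀}(t)}`. -/
noncomputable def Bwd (n : ℕ) (x : Equiv.Perm (Fin n)) : Finset ℕ :=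
  (Finset.Icc 1 n).filter (fun t => posOf (w0 n) t < posOf x t)

/-- `D_R(x)`: the coefficient of `q^{N-1}` in `wt_R(x)`, where `N = n(n-1)/2`. -/
noncomputable def D (n : ℕ) (R : List ℕ) (x : Equiv.Perm (Fin n)) : ℤ :=
  (wt n R x).coeff (n * (n - 1) / 2 - 1)

/-- `σ_b(x) = sign(pos_x(b) − pos_{w₀}(b)) ∈ {−1,0,+1}`. -/
noncomputable def sigmaVal (n : ℕ) (b : ℕ) (x : Equiv.Perm (Fin n)) : ℤ :=
  Int.sign ((posOf x b : ℤ) - (posOf (w0 n) b : ℤ))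

/-- `Θ_R(a,b,c) = Σ_{x : Supp(x) = [a,c]} D_R(x)·σ_b(x)`. -/
noncomputable def Theta (n : ℕ) (R : List ℕ) (a b c : ℕ) : ℤ :=
  ∑ x ∈ Finset.univ.filter (fun x : Equiv.Perm (Fin n) => Supp n x = Finset.Icc a c),
    D n R x * sigmaVal n b x

end BSDist

namespace BSDist

/-- Bruhat order via the subword property: `x ≤ w` iff every reduced word for
`w` has a subword whose product is `x`. -/
def BruhatLe (n : ℕ) (x w : Equiv.Perm (Fin n)) : Prop :=
  ∀ R : List ℕ, IsReducedWordFor n R w →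
    ∃ T : List ℕ, T.Sublist R ∧ wprod n T = x


-- ===================== auxiliary development =====================
variable {n : ℕ}

lemma sTr_eq_swap {i : ℕ} (h1 : 1 ≤ i) (h2 : i < n) :
    sTr n i = Equiv.swap ⟨i - 1, by omega⟩ ⟨i, h2⟩ := by
  rw [sTr, dif_pos ⟨h1, h2⟩]
lemma sTr_eq_one {i : ℕ} (h : ¬(1 ≤ i ∧ i < n)) : sTr n i = 1 := by rw [sTr, dif_neg h]
lemma sTr_mul_self (i : ℕ) : sTr n i * sTr n i = 1 := by
  by_cases h : 1 ≤ i ∧ i < n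
  · rw [sTr_eq_swap h.1 h.2, Equiv.swap_mul_self]
  · rw [sTr_eq_one h, mul_one]
@[simp] lemma wprod_nil : wprod n [] = 1 := rfl
lemma wprod_cons (i : ℕ) (R : List ℕ) : wprod n (i :: R) = sTr n i * wprod n R := by simp [wprod]
lemma wprod_append (A B : List ℕ) : wprod n (A ++ B) = wprod n A * wprod n B := by simp [wprod]
lemma wprod_concat (R : List ℕ) (i : ℕ) : wprod n (R ++ [i]) = wprod n R * sTr n i := by simp [wprod]
lemma wprod_singleton (i : ℕ) : wprod n [i] = sTr n i := by simp [wprod]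

lemma swap_adj_lt {a b p q : Fin n} (hab : (a : ℕ) + 1 = b) (hpq : p < q)
    (hne : ¬(p = a ∧ q = b)) : Equiv.swap a b p < Equiv.swap a b q := by
  rcases eq_or_ne p a with rfl | hpa
  · rcases eq_or_ne q b with rfl | hqb
    · exact absurd ⟨rfl, rfl⟩ hne
    · have hqa : q ≠ p := hpq.ne'
      rw [Equiv.swap_apply_left, Equiv.swap_apply_of_ne_of_ne hqa hqb]
      rw [Fin.lt_def] at hpq ⊢
      have := Fin.val_ne_of_ne hqb
      omega
  · rcases eq_or_ne p b with rfl | hpb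
    · have hq : (p : ℕ) < q := hpq
      have hqa : q ≠ a := by
        intro h; subst h; omega
      have hqb : q ≠ p := hpq.ne'
      rw [Equiv.swap_apply_right, Equiv.swap_apply_of_ne_of_ne hqa hqb]
      rw [Fin.lt_def]; omega
    · rw [Equiv.swap_apply_of_ne_of_ne hpa hpb]
      rcases eq_or_ne q a with rfl | hqa
      · rw [Equiv.swap_apply_left, Fin.lt_def] at *
        omega
      · rcases eq_or_ne q b with rfl | hqb
        · have hpa' := Fin.val_ne_of_ne hpa
          rw [Equiv.swap_apply_right, Fin.lt_def] at *
          omega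
        · rwa [Equiv.swap_apply_of_ne_of_ne hqa hqb]

/-- key length lemma: multiplying by an adjacent transposition with increasing values -/
lemma len_mul_swap_of_lt {a b : Fin n} (hab : (a : ℕ) + 1 = b)
    (w : Equiv.Perm (Fin n)) (h : w a < w b) :
    len (w * Equiv.swap a b) = len w + 1 := by
  classical
  have hablt : a < b := by rw [Fin.lt_def]; omega
  set s := Equiv.swap a b with hs
  set A := (Finset.univ.filter (fun p : Fin n × Fin n => p.1 < p.2 ∧ (w * s) p.2 < (w * s) p.1)) with hA
  set B := (Finset.univ.filter (fun p : Fin n × Fin n => p.1 < p.2 ∧ w p.2 < w p.1)) with hB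
  have hmemA : (a, b) ∈ A := by
    simp only [hA, Finset.mem_filter, Finset.mem_univ, true_and]
    refine ⟨hablt, ?_⟩
    simpa [hs, Equiv.Perm.mul_apply, Equiv.swap_apply_left, Equiv.swap_apply_right] using h
  have hmemB : (a, b) ∉ B := by
    simp only [hB, Finset.mem_filter, Finset.mem_univ, true_and, not_and]
    intro _; exact not_lt.mpr h.le
  have hcard : (A.erase (a, b)).card = (B.erase (a, b)).card := by
    apply Finset.card_bij' (i := fun p _ => (s p.1, s p.2)) (j := fun p _ => (s p.1, s p.2))
    · intro p hp
      simp only [Finset.mem_erase, hA, Finset.mem_filter, Finset.mem_univ, true_and] at hp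
      obtain ⟨hpne, hplt, hpin⟩ := hp
      have hslt : s p.1 < s p.2 := by
        apply swap_adj_lt hab hplt
        intro ⟨h1, h2⟩; exact hpne (Prod.ext h1 h2)
      simp only [Finset.mem_erase, hB, Finset.mem_filter, Finset.mem_univ, true_and]
      refine ⟨?_, hslt, by simpa [hs, Equiv.Perm.mul_apply, Equiv.swap_apply_self] using hpin⟩
      intro hcontra
      have h1 : s p.1 = a := congrArg Prod.fst hcontra
      have h2 : s p.2 = b := congrArg Prod.snd hcontra
      apply_fun s at h1 h2
      simp only [hs, Equiv.swap_apply_self, Equiv.swap_apply_left, Equiv.swap_apply_right] at h1 h2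
      rw [h1, h2] at hplt
      exact absurd hplt (not_lt.mpr hablt.le)

    · intro p hp
      simp only [Finset.mem_erase, hB, Finset.mem_filter, Finset.mem_univ, true_and] at hp
      obtain ⟨hpne, hplt, hpin⟩ := hp
      have hslt : s p.1 < s p.2 := by
        apply swap_adj_lt hab hplt
        intro ⟨h1, h2⟩; exact hpne (Prod.ext h1 h2)
      simp only [Finset.mem_erase, hA, Finset.mem_filter, Finset.mem_univ, true_and]
      refine ⟨?_, hslt, by simpa [hs, Equiv.Perm.mul_apply, Equiv.swap_apply_self] using hpin⟩
      intro hcontra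
      have h1 : s p.1 = a := congrArg Prod.fst hcontra
      have h2 : s p.2 = b := congrArg Prod.snd hcontra
      apply_fun s at h1 h2
      simp only [hs, Equiv.swap_apply_self, Equiv.swap_apply_left, Equiv.swap_apply_right] at h1 h2
      rw [h1, h2] at hplt
      exact absurd hplt (not_lt.mpr hablt.le)

    · intro p _; simp [hs, Equiv.swap_apply_self]
    · intro p _; simp [hs, Equiv.swap_apply_self]
  have e1 : len (w * s) = A.card := rfl
  have e2 : len w = B.card := rfl
  rw [e1, e2, ← Finset.card_erase_add_one hmemA, hcard, Finset.erase_eq_of_notMem hmemB]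

-- ### consequences
lemma len_mul_sTr_of_lt {i : ℕ} (h1 : 1 ≤ i) (h2 : i < n) (w : Equiv.Perm (Fin n))
    (h : w ⟨i - 1, by omega⟩ < w ⟨i, h2⟩) : len (w * sTr n i) = len w + 1 := by
  rw [sTr_eq_swap h1 h2]
  exact len_mul_swap_of_lt (by simp; omega) w h

lemma len_mul_sTr_of_gt {i : ℕ} (h1 : 1 ≤ i) (h2 : i < n) (w : Equiv.Perm (Fin n))
    (h : w ⟨i, h2⟩ < w ⟨i - 1, by omega⟩) : len (w * sTr n i) + 1 = len w := by
  have key := len_mul_sTr_of_lt h1 h2 (w * sTr n i) ?_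
  · rw [mul_assoc, sTr_mul_self, mul_one] at key
    omega
  · have hs : sTr n i = Equiv.swap ⟨i - 1, by omega⟩ ⟨i, h2⟩ := sTr_eq_swap h1 h2
    simpa [hs, Equiv.Perm.mul_apply, Equiv.swap_apply_left, Equiv.swap_apply_right] using h

lemma sTr_apply_ne {i : ℕ} (h1 : 1 ≤ i) (h2 : i < n) (w : Equiv.Perm (Fin n)) :
    w ⟨i - 1, by omega⟩ ≠ w ⟨i, h2⟩ := by
  intro h
  have := w.injective h
  simp [Fin.ext_iff] at this
  omega

lemma len_lt_iff_sTr {i : ℕ} (h1 : 1 ≤ i) (h2 : i < n) (w : Equiv.Perm (Fin n)) :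
    len w < len (w * sTr n i) ↔ w ⟨i - 1, by omega⟩ < w ⟨i, h2⟩ := by
  rcases lt_or_gt_of_ne (sTr_apply_ne h1 h2 w) with h | h
  · simp only [h, iff_true]
    rw [len_mul_sTr_of_lt h1 h2 w h]; omega
  · have := len_mul_sTr_of_gt h1 h2 w h
    constructor
    · intro hc; omega
    · intro hc; exact absurd hc (not_lt.mpr h.le)

lemma len_mul_sTr_dichotomy {i : ℕ} (h1 : 1 ≤ i) (h2 : i < n) (w : Equiv.Perm (Fin n)) :
    len (w * sTr n i) = len w + 1 ∨ len (w * sTr n i) + 1 = len w := by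
  rcases lt_or_gt_of_ne (sTr_apply_ne h1 h2 w) with h | h
  · exact Or.inl (len_mul_sTr_of_lt h1 h2 w h)
  · exact Or.inr (len_mul_sTr_of_gt h1 h2 w h)

lemma len_one : len (1 : Equiv.Perm (Fin n)) = 0 := by
  rw [len, Finset.card_eq_zero, Finset.filter_eq_empty_iff]
  rintro p -
  rintro ⟨h1, h2⟩
  simp at h2
  exact absurd h1 (not_lt.mpr h2.le)

lemma eq_one_of_len_eq_zero {w : Equiv.Perm (Fin n)} (h : len w = 0) : w = 1 := by
  rw [len, Finset.card_eq_zero, Finset.filter_eq_empty_iff] at h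
  have hmono : StrictMono w := by
    intro p q hpq
    have := h (Finset.mem_univ (p, q))
    simp only [not_and] at this
    rcases lt_trichotomy (w p) (w q) with h' | h' | h'
    · exact h'
    · exact absurd (w.injective h') hpq.ne
    · exact absurd h' (this hpq)
  have hr : Set.range (w : Fin n → Fin n) = Set.range (id : Fin n → Fin n) := by
    ext y
    simp only [Set.mem_range]
    constructor
    · rintro ⟨z, rfl⟩; exact ⟨w z, rfl⟩
    · rintro ⟨z, rfl⟩; exact ⟨w.symm (id z), by simp⟩
  have hw : (w : Fin n → Fin n) = (id : Fin n → Fin n) :=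
    (@StrictMono.range_inj (Fin n) (Fin n) _ _ (inferInstance : WellFoundedLT (Fin n))
      w id hmono strictMono_id).mp hr
  apply Equiv.ext
  intro x
  exact congrFun hw x

lemma len_inv (w : Equiv.Perm (Fin n)) : len w⁻¹ = len w := by
  rw [len, len]
  apply Finset.card_bij' (i := fun p _ => (w⁻¹ p.2, w⁻¹ p.1)) (j := fun p _ => (w p.2, w p.1))
  · intro p hp
    simp only [Finset.mem_filter, Finset.mem_univ, true_and] at hp ⊢
    exact ⟨hp.2, by simp [hp.1]⟩
  · intro p hp
    simp only [Finset.mem_filter, Finset.mem_univ, true_and] at hp ⊢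
    exact ⟨hp.2, by simp [hp.1]⟩
  · intro p _; simp
  · intro p _; simp

lemma len_mul_sTr_le (w : Equiv.Perm (Fin n)) (i : ℕ) :
    len (w * sTr n i) ≤ len w + 1 := by
  by_cases h : 1 ≤ i ∧ i < n
  · rcases len_mul_sTr_dichotomy h.1 h.2 w with h' | h' <;> omega
  · rw [sTr_eq_one h, mul_one]; omega

lemma len_mul_wprod_le (u : Equiv.Perm (Fin n)) (R : List ℕ) :
    len (u * wprod n R) ≤ len u + R.length := by
  induction R generalizing u with
  | nil => simp [len_one]
  | cons i R ih =>
    rw [wprod_cons, ← mul_assoc]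
    calc len (u * sTr n i * wprod n R) ≤ len (u * sTr n i) + R.length := ih _
    _ ≤ len u + 1 + R.length := by have := len_mul_sTr_le u i; omega
    _ = len u + (i :: R).length := by simp; omega

lemma len_wprod_le (R : List ℕ) : len (wprod n R) ≤ R.length := by
  have := len_mul_wprod_le (1 : Equiv.Perm (Fin n)) R
  simpa [len_one] using this

lemma len_sTr_mul_le (v : Equiv.Perm (Fin n)) (i : ℕ) :
    len (sTr n i * v) ≤ len v + 1 := by
  have h1 : (sTr n i * v)⁻¹ = v⁻¹ * sTr n i := by
    rw [mul_inv_rev]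
    congr 1
    exact inv_eq_iff_mul_eq_one.mpr (sTr_mul_self i)
  calc len (sTr n i * v) = len (v⁻¹ * sTr n i) := by rw [← len_inv, h1]
  _ ≤ len v⁻¹ + 1 := len_mul_sTr_le _ _
  _ = len v + 1 := by rw [len_inv]

lemma len_wprod_mul_le (R : List ℕ) (v : Equiv.Perm (Fin n)) :
    len (wprod n R * v) ≤ R.length + len v := by
  induction R generalizing v with
  | nil => simp
  | cons i R ih =>
    rw [wprod_cons, mul_assoc]
    calc len (sTr n i * (wprod n R * v)) ≤ len (wprod n R * v) + 1 := len_sTr_mul_le _ _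
    _ ≤ R.length + len v + 1 := by have := ih v; omega
    _ = (i :: R).length + len v := by simp; omega

/-- a factor of a reduced word is reduced -/
lemma reduced_of_append {A B : List ℕ}
    (h : (A ++ B).length = len (wprod n (A ++ B))) :
    A.length = len (wprod n A) ∧ B.length = len (wprod n B) := by
  have h1 : len (wprod n A * wprod n B) ≤ len (wprod n A) + B.length :=
    len_mul_wprod_le _ _
  have h2 : len (wprod n A * wprod n B) ≤ A.length + len (wprod n B) :=
    len_wprod_mul_le _ _
  have h3 : len (wprod n A) ≤ A.length := len_wprod_le A
  have h4 : len (wprod n B) ≤ B.length := len_wprod_le B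
  rw [wprod_append] at h
  simp only [List.length_append] at h
  omega

-- ### NEW: existence of reduced words
lemma exists_descent {w : Equiv.Perm (Fin n)} (h : w ≠ 1) :
    ∃ i, ∃ (h1 : 1 ≤ i) (h2 : i < n), w ⟨i, h2⟩ < w ⟨i - 1, by omega⟩ := by
  by_contra hc
  push_neg at hc
  apply h
  apply eq_one_of_len_eq_zero
  by_contra hlen
  -- w is strictly monotone if no descent
  have hmono : StrictMono w := by
    have hadj : ∀ k : ℕ, ∀ hk : k + 1 < n, w ⟨k, by omega⟩ < w ⟨k + 1, hk⟩ := by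
      intro k hk
      have h1 : 1 ≤ k + 1 := by omega
      have := hc (k + 1) h1 hk
      have hne := sTr_apply_ne h1 hk w
      simp only [Nat.add_sub_cancel] at this hne
      rcases lt_or_gt_of_ne hne with h' | h'
      · exact h'
      · exact absurd h' (not_lt.mpr this)
    -- strict mono from adjacent comparisons
    intro p q hpq
    rcases p with ⟨p, hp⟩
    rcases q with ⟨q, hq⟩
    rw [Fin.lt_def] at hpq
    simp only at hpq
    clear hc hlen h
    induction q with
    | zero => omega
    | succ m ih =>
      have hm : m < n := by omega
      rcases Nat.lt_or_ge p m with h' | h'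
      · exact lt_trans (ih hm h') (hadj m hq)
      · have : p = m := by omega
        subst this
        exact hadj p hq
  -- now w = 1 gives len 0
  exfalso
  apply hlen
  rw [len, Finset.card_eq_zero, Finset.filter_eq_empty_iff]
  rintro p -
  rintro ⟨h1, h2⟩
  exact absurd (hmono h1) (not_lt.mpr h2.le)

lemma exists_reduced_word (w : Equiv.Perm (Fin n)) : ∃ R, IsReducedWordFor n R w := by
  generalize hm : len w = m
  induction m using Nat.strong_induction_on generalizing w with
  | _ m ih =>
    rcases Nat.eq_zero_or_pos m with rfl | hpos
    · have hw : w = 1 := eq_one_of_len_eq_zero hm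
      subst hw
      exact ⟨[], ⟨⟨fun i hi => absurd hi List.not_mem_nil, by simp [len_one]⟩, rfl⟩⟩
    · have hw1 : w ≠ 1 := by
        intro h; rw [h, len_one] at hm; omega
      obtain ⟨i, h1, h2, hdesc⟩ := exists_descent hw1
      have hlen := len_mul_sTr_of_gt h1 h2 w hdesc
      obtain ⟨R₀, ⟨⟨halph, hred⟩, hprod⟩⟩ := ih (len (w * sTr n i)) (by omega) (w * sTr n i) rfl
      refine ⟨R₀ ++ [i], ⟨⟨?_, ?_⟩, ?_⟩⟩
      · intro j hj
        rcases List.mem_append.mp hj with h | h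
        · exact halph j h
        · simp at h; subst h; exact ⟨h1, h2⟩
      · rw [wprod_concat, hprod, mul_assoc, sTr_mul_self, mul_one]
        rw [hprod] at hred
        simp only [List.length_append, List.length_singleton]
        omega
      · rw [wprod_concat, hprod, mul_assoc, sTr_mul_self, mul_one]

def DProp (n : ℕ) (R : List ℕ) (x : Equiv.Perm (Fin n)) : Prop :=
  ∃ T : List ℕ, T.Sublist R ∧ wprod n T = x

open scoped Classical

lemma wt_nil (x : Equiv.Perm (Fin n)) : wt n [] x = if x = 1 then 1 else 0 := rfl

lemma wt_concat (R : List ℕ) (i : ℕ) (x : Equiv.Perm (Fin n)) :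
    wt n (R ++ [i]) x =
      if len x < len (x * sTr n i) then wt n R x + wt n R (x * sTr n i)
      else Polynomial.X * wt n R x + Polynomial.X * wt n R (x * sTr n i) := by
  unfold wt
  rw [List.foldl_concat]

def NN (p : Polynomial ℤ) : Prop := ∀ k, 0 ≤ p.coeff k

lemma NN_add {p q : Polynomial ℤ} (hp : NN p) (hq : NN q) : NN (p + q) := by
  intro k; rw [Polynomial.coeff_add]; exact add_nonneg (hp k) (hq k)

lemma NN_X_mul {p : Polynomial ℤ} (hp : NN p) : NN (Polynomial.X * p) := by
  intro k
  cases k with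
  | zero => rw [Polynomial.coeff_X_mul_zero]
  | succ m => rw [Polynomial.coeff_X_mul]; exact hp m

lemma wt_NN (R : List ℕ) (x : Equiv.Perm (Fin n)) : NN (wt n R x) := by
  induction R using List.reverseRecOn generalizing x with
  | nil =>
    intro k
    rw [wt_nil]
    split_ifs <;> simp [Polynomial.coeff_one] <;> positivity
  | append_singleton R i ih =>
    rw [wt_concat]
    split_ifs
    · exact NN_add (ih x) (ih _)
    · exact NN_add (NN_X_mul (ih x)) (NN_X_mul (ih _))

lemma NN_add_eq_zero {p q : Polynomial ℤ} (hp : NN p) (hq : NN q) (h : p + q = 0) :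
    p = 0 ∧ q = 0 := by
  constructor <;> [skip; skip] <;>
  · ext k
    have := congrArg (fun r => Polynomial.coeff r k) h
    simp only [Polynomial.coeff_add, Polynomial.coeff_zero] at this
    have h1 := hp k
    have h2 := hq k
    simp only [Polynomial.coeff_zero]
    omega

lemma wt_concat_ne_zero (R : List ℕ) (i : ℕ) (x : Equiv.Perm (Fin n)) :
    wt n (R ++ [i]) x ≠ 0 ↔ wt n R x ≠ 0 ∨ wt n R (x * sTr n i) ≠ 0 := by
  rw [wt_concat]
  have h1 := wt_NN R x
  have h2 := wt_NN R (x * sTr n i)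
  constructor
  · intro h
    by_contra hc
    push_neg at hc
    rw [hc.1, hc.2] at h
    simp at h
  · intro h hc
    split_ifs at hc with hif
    · obtain ⟨e1, e2⟩ := NN_add_eq_zero h1 h2 hc
      tauto
    · obtain ⟨e1, e2⟩ := NN_add_eq_zero (NN_X_mul h1) (NN_X_mul h2) hc
      rw [mul_eq_zero] at e1 e2
      have hX : (Polynomial.X : Polynomial ℤ) ≠ 0 := Polynomial.X_ne_zero
      rcases h with h | h
      · rcases e1 with e | e
        · exact hX e
        · exact h e
      · rcases e2 with e | e
        · exact hX e
        · exact h e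

lemma sublist_concat_iff {T R : List ℕ} {i : ℕ} :
    T.Sublist (R ++ [i]) ↔ T.Sublist R ∨ ∃ T₀, T = T₀ ++ [i] ∧ T₀.Sublist R := by
  constructor
  · intro h
    rw [List.sublist_append_iff] at h
    obtain ⟨T₁, T₂, rfl, h1, h2⟩ := h
    rcases List.sublist_singleton.mp h2 with rfl | rfl
    · left; simpa using h1
    · right; exact ⟨T₁, rfl, h1⟩
  · rintro (h | ⟨T₀, rfl, h⟩)
    · exact h.trans (List.sublist_append_left _ _)
    · exact List.Sublist.append h (List.Sublist.refl _)

lemma dprop_concat {R : List ℕ} {i : ℕ} {x : Equiv.Perm (Fin n)} :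
    DProp n (R ++ [i]) x ↔ DProp n R x ∨ DProp n R (x * sTr n i) := by
  constructor
  · rintro ⟨T, hsub, rfl⟩
    rcases sublist_concat_iff.mp hsub with h | ⟨T₀, rfl, h⟩
    · exact Or.inl ⟨T, h, rfl⟩
    · right
      refine ⟨T₀, h, ?_⟩
      rw [wprod_concat, mul_assoc, sTr_mul_self, mul_one]
  · rintro (⟨T, hsub, rfl⟩ | ⟨T, hsub, hprod⟩)
    · exact ⟨T, hsub.trans (List.sublist_append_left _ _), rfl⟩
    · refine ⟨T ++ [i], List.Sublist.append hsub (List.Sublist.refl _), ?_⟩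
      rw [wprod_concat, hprod, mul_assoc, sTr_mul_self, mul_one]

lemma dprop_nil {x : Equiv.Perm (Fin n)} : DProp n [] x ↔ x = 1 := by
  constructor
  · rintro ⟨T, hsub, rfl⟩
    rw [List.sublist_nil.mp hsub]
    simp
  · rintro rfl; exact ⟨[], List.Sublist.refl _, rfl⟩

/-- Part A: nonvanishing of the weight equals subword existence. -/
theorem wt_ne_zero_iff_dprop (R : List ℕ) (x : Equiv.Perm (Fin n)) :
    wt n R x ≠ 0 ↔ DProp n R x := by
  induction R using List.reverseRecOn generalizing x with
  | nil =>
    rw [wt_nil, dprop_nil]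
    split_ifs with h
    · simpa using h
    · simpa using h
  | append_singleton R i ih =>
    rw [wt_concat_ne_zero, dprop_concat, ih, ih]

-- ### small sTr facts
lemma descent_iff_values {i : ℕ} (h1 : 1 ≤ i) (h2 : i < n) (w : Equiv.Perm (Fin n)) :
    len (w * sTr n i) + 1 = len w ↔ w ⟨i, h2⟩ < w ⟨i - 1, by omega⟩ := by
  constructor
  · intro h
    rcases lt_or_gt_of_ne (sTr_apply_ne h1 h2 w) with h' | h'
    · have := len_mul_sTr_of_lt h1 h2 w h'
      omega
    · exact h'
  · exact len_mul_sTr_of_gt h1 h2 w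

lemma sTr_apply_fix {i : ℕ} (k : Fin n) (hk1 : (k : ℕ) ≠ i - 1) (hk2 : (k : ℕ) ≠ i) :
    sTr n i k = k := by
  by_cases h : 1 ≤ i ∧ i < n
  · rw [sTr_eq_swap h.1 h.2]
    apply Equiv.swap_apply_of_ne_of_ne
    · intro hc; apply hk1; rw [hc]
    · intro hc; apply hk2; rw [hc]
  · rw [sTr_eq_one h]; rfl

lemma sTr_apply_lo {i : ℕ} (h1 : 1 ≤ i) (h2 : i < n) :
    sTr n i ⟨i - 1, by omega⟩ = ⟨i, h2⟩ := by
  rw [sTr_eq_swap h1 h2, Equiv.swap_apply_left]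

lemma sTr_apply_hi {i : ℕ} (h1 : 1 ≤ i) (h2 : i < n) :
    sTr n i ⟨i, h2⟩ = ⟨i - 1, by omega⟩ := by
  rw [sTr_eq_swap h1 h2, Equiv.swap_apply_right]

/-- commuting simple transpositions -/
lemma sTr_comm {i j : ℕ} (h : i + 1 < j ∨ j + 1 < i) :
    sTr n i * sTr n j = sTr n j * sTr n i := by
  by_cases hi : 1 ≤ i ∧ i < n
  · by_cases hj : 1 ≤ j ∧ j < n
    · rw [sTr_eq_swap hi.1 hi.2, sTr_eq_swap hj.1 hj.2]
      set a : Fin n := ⟨i - 1, by omega⟩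
      set b : Fin n := ⟨i, hi.2⟩
      set c : Fin n := ⟨j - 1, by omega⟩
      set d : Fin n := ⟨j, hj.2⟩
      have hac : a ≠ c := fun hc => by
        have : i - 1 = j - 1 := congrArg Fin.val hc; omega
      have had : a ≠ d := fun hc => by
        have : i - 1 = j := congrArg Fin.val hc; omega
      have hbc : b ≠ c := fun hc => by
        have : i = j - 1 := congrArg Fin.val hc; omega
      have hbd : b ≠ d := fun hc => by
        have : i = j := congrArg Fin.val hc; omega
      apply Equiv.Perm.Disjoint.commute
      intro x
      rcases eq_or_ne x a with rfl | hxa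
      · right; exact Equiv.swap_apply_of_ne_of_ne hac had
      rcases eq_or_ne x b with rfl | hxb
      · right; exact Equiv.swap_apply_of_ne_of_ne hbc hbd
      · left; exact Equiv.swap_apply_of_ne_of_ne hxa hxb
    · rw [sTr_eq_one hj, mul_one, one_mul]
  · rw [sTr_eq_one hi, mul_one, one_mul]

lemma swap_braid {d e f : Fin n} (hde : d ≠ e) (hdf : d ≠ f) (hef : e ≠ f) :
    Equiv.swap d e * Equiv.swap e f * Equiv.swap d e
      = Equiv.swap e f * Equiv.swap d e * Equiv.swap e f := by
  have key1 : Equiv.swap d e * Equiv.swap e f * Equiv.swap d e = Equiv.swap d f := by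
    have h := Equiv.swap_apply_apply (Equiv.swap d e) e f
    rw [Equiv.swap_apply_right, Equiv.swap_apply_of_ne_of_ne (Ne.symm hdf) (Ne.symm hef),
        Equiv.swap_inv] at h
    exact h.symm
  have key2 : Equiv.swap e f * Equiv.swap d e * Equiv.swap e f = Equiv.swap d f := by
    have h := Equiv.swap_apply_apply (Equiv.swap e f) d e
    rw [Equiv.swap_apply_of_ne_of_ne hde hdf, Equiv.swap_apply_left, Equiv.swap_inv] at h
    rw [← h, Equiv.swap_comm]
  rw [key1, key2]

/-- braid relation -/
lemma sTr_braid {i : ℕ} (h1 : 1 ≤ i) (h2 : i + 1 < n) :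
    sTr n i * sTr n (i + 1) * sTr n i = sTr n (i + 1) * sTr n i * sTr n (i + 1) := by
  have hi2 : i < n := by omega
  have hj1 : 1 ≤ i + 1 := by omega
  rw [sTr_eq_swap h1 hi2, sTr_eq_swap hj1 h2]
  have he : (⟨i + 1 - 1, by omega⟩ : Fin n) = (⟨i, hi2⟩ : Fin n) := by simp
  rw [he]
  apply swap_braid
  · exact fun hc => by have : i - 1 = i := congrArg Fin.val hc; omega
  · exact fun hc => by have : i - 1 = i + 1 := congrArg Fin.val hc; omega
  · exact fun hc => by have : i = i + 1 := congrArg Fin.val hc; omega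

lemma sublist_pair {l : List ℕ} {a b : ℕ} :
    l.Sublist [a, b] ↔ l = [] ∨ l = [a] ∨ l = [b] ∨ l = [a, b] := by
  constructor
  · intro h
    cases h with
    | cons _ h1 =>
      rcases List.sublist_singleton.mp h1 with rfl | rfl
      · exact Or.inl rfl
      · exact Or.inr (Or.inr (Or.inl rfl))
    | cons_cons _ h1 =>
      rcases List.sublist_singleton.mp h1 with rfl | rfl
      · exact Or.inr (Or.inl rfl)
      · exact Or.inr (Or.inr (Or.inr rfl))
  · rintro (rfl | rfl | rfl | rfl)
    · exact List.nil_sublist _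
    · exact (List.nil_sublist [b]).cons₂ a
    · exact (List.Sublist.refl [b]).cons a
    · exact List.Sublist.refl _

lemma sublist_triple {l : List ℕ} {a b c : ℕ} :
    l.Sublist [a, b, c] ↔
      l = [] ∨ l = [a] ∨ l = [b] ∨ l = [c] ∨ l = [a, b] ∨ l = [a, c] ∨ l = [b, c] ∨
        l = [a, b, c] := by
  constructor
  · intro h
    cases h with
    | cons _ h1 =>
      rcases sublist_pair.mp h1 with rfl | rfl | rfl | rfl
      · exact Or.inl rfl
      · tauto
      · tauto
      · tauto
    | cons_cons _ h1 =>
      rcases sublist_pair.mp h1 with rfl | rfl | rfl | rfl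
      · tauto
      · tauto
      · tauto
      · tauto
  · rintro (rfl | rfl | rfl | rfl | rfl | rfl | rfl | rfl)
    · exact List.nil_sublist _
    · exact (List.nil_sublist [b, c]).cons₂ a
    · exact ((List.nil_sublist [c]).cons₂ b).cons a
    · exact ((List.Sublist.refl [c]).cons b).cons a
    · exact ((List.nil_sublist [c]).cons₂ b).cons₂ a
    · exact ((List.Sublist.refl [c]).cons b).cons₂ a
    · exact (List.Sublist.refl [b, c]).cons a
    · exact List.Sublist.refl _

lemma wprod_pair (a b : ℕ) : wprod n [a, b] = sTr n a * sTr n b := by simp [wprod]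

lemma wprod_triple (a b c : ℕ) : wprod n [a, b, c] = sTr n a * sTr n b * sTr n c := by
  simp [wprod, mul_assoc]

lemma dprop_comm {U : List ℕ} {i j : ℕ}
    (hcomm : sTr n i * sTr n j = sTr n j * sTr n i) (x : Equiv.Perm (Fin n)) :
    DProp n (U ++ [i, j]) x → DProp n (U ++ [j, i]) x := by
  rintro ⟨T, hsub, rfl⟩
  rw [List.sublist_append_iff] at hsub
  obtain ⟨T₁, T₂, rfl, h1, h2⟩ := hsub
  rw [wprod_append]
  rcases sublist_pair.mp h2 with rfl | rfl | rfl | rfl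
  · exact ⟨T₁, h1.trans (List.sublist_append_left _ _), by simp⟩
  · refine ⟨T₁ ++ [i], List.Sublist.append h1 ?_, by rw [wprod_append]⟩
    exact (List.Sublist.refl [i]).cons j
  · refine ⟨T₁ ++ [j], List.Sublist.append h1 ?_, by rw [wprod_append]⟩
    exact (List.nil_sublist [i]).cons₂ j
  · refine ⟨T₁ ++ [j, i], List.Sublist.append h1 (List.Sublist.refl _), ?_⟩
    rw [wprod_append, wprod_pair, wprod_pair, hcomm]

lemma dprop_braid {U : List ℕ} {i j : ℕ}
    (hbraid : sTr n i * sTr n j * sTr n i = sTr n j * sTr n i * sTr n j)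
    (x : Equiv.Perm (Fin n)) :
    DProp n (U ++ [i, j, i]) x → DProp n (U ++ [j, i, j]) x := by
  rintro ⟨T, hsub, rfl⟩
  rw [List.sublist_append_iff] at hsub
  obtain ⟨T₁, T₂, rfl, h1, h2⟩ := hsub
  rw [wprod_append]
  have subJ : [j].Sublist [j, i, j] := (List.nil_sublist [i, j]).cons₂ j
  have subI : [i].Sublist [j, i, j] := ((List.nil_sublist [j]).cons₂ i).cons j
  have subIJ : [i, j].Sublist [j, i, j] := ((List.Sublist.refl [j]).cons₂ i).cons j
  have subJI : [j, i].Sublist [j, i, j] := ((List.nil_sublist [j]).cons₂ i).cons₂ j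
  rcases sublist_triple.mp h2 with rfl | rfl | rfl | rfl | rfl | rfl | rfl | rfl
  · exact ⟨T₁, h1.trans (List.sublist_append_left _ _), by simp⟩
  · exact ⟨T₁ ++ [i], List.Sublist.append h1 subI, by rw [wprod_append]⟩
  · exact ⟨T₁ ++ [j], List.Sublist.append h1 subJ, by rw [wprod_append]⟩
  · exact ⟨T₁ ++ [i], List.Sublist.append h1 subI, by rw [wprod_append]⟩
  · exact ⟨T₁ ++ [i, j], List.Sublist.append h1 subIJ, by rw [wprod_append]⟩
  · -- T₂ = [i, i]
    refine ⟨T₁, h1.trans (List.sublist_append_left _ _), ?_⟩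
    rw [wprod_pair, sTr_mul_self, mul_one]
  · exact ⟨T₁ ++ [j, i], List.Sublist.append h1 subJI, by rw [wprod_append]⟩
  · refine ⟨T₁ ++ [j, i, j], List.Sublist.append h1 (List.Sublist.refl _), ?_⟩
    rw [wprod_append, wprod_triple, wprod_triple, hbraid]

lemma mul_sTr_sTr_cancel (u : Equiv.Perm (Fin n)) (i : ℕ) : u * sTr n i * sTr n i = u := by
  rw [mul_assoc, sTr_mul_self, mul_one]

lemma concat_reduced_facts {R₀ : List ℕ} {i : ℕ} {w : Equiv.Perm (Fin n)}
    (h : IsReducedWordFor n (R₀ ++ [i]) w) :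
    (1 ≤ i ∧ i < n) ∧ IsReducedWordFor n R₀ (w * sTr n i) ∧ len (w * sTr n i) + 1 = len w := by
  obtain ⟨⟨halph, hlen⟩, hprod⟩ := h
  have hi : 1 ≤ i ∧ i < n := halph i (by simp)
  have hprod₀ : wprod n R₀ = w * sTr n i := by
    rw [← hprod, wprod_concat, mul_assoc, sTr_mul_self, mul_one]
  have hred : R₀.length = len (wprod n R₀) := (reduced_of_append hlen).1
  have hlenw : len w = R₀.length + 1 := by
    have h2 : (R₀ ++ [i]).length = len w := by rw [hlen, hprod]
    simp only [List.length_append, List.length_cons, List.length_nil] at h2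
    omega
  refine ⟨hi, ⟨⟨fun a ha => halph a (List.mem_append_left _ ha), hred⟩, hprod₀⟩, ?_⟩
  rw [← hprod₀, ← hred]
  omega

lemma reduced_for_append {U L : List ℕ} {v w : Equiv.Perm (Fin n)}
    (hU : IsReducedWordFor n U v) (hL : Alphabet n L)
    (hprod : v * wprod n L = w) (hlen : len w = len v + L.length) :
    IsReducedWordFor n (U ++ L) w := by
  obtain ⟨⟨hUalph, hUlen⟩, hUprod⟩ := hU
  have hwprod : wprod n (U ++ L) = w := by rw [wprod_append, hUprod, hprod]
  refine ⟨⟨?_, ?_⟩, hwprod⟩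
  · intro a ha
    rcases List.mem_append.mp ha with h | h
    · exact hUalph a h
    · exact hL a h
  · rw [hwprod, List.length_append]
    have hUv : U.length = len v := by rw [hUlen, hUprod]
    omega

lemma dprop_samelast {w : Equiv.Perm (Fin n)}
    (IH : ∀ v : Equiv.Perm (Fin n), len v < len w → ∀ Q Q' : List ℕ,
      IsReducedWordFor n Q v → IsReducedWordFor n Q' v →
      ∀ y : Equiv.Perm (Fin n), DProp n Q y → DProp n Q' y)
    {R₀ R₀' : List ℕ} {i : ℕ}
    (hR : IsReducedWordFor n (R₀ ++ [i]) w) (hR' : IsReducedWordFor n (R₀' ++ [i]) w)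
    (x : Equiv.Perm (Fin n)) (hx : DProp n (R₀ ++ [i]) x) : DProp n (R₀' ++ [i]) x := by
  obtain ⟨hi, hRv, hlt⟩ := concat_reduced_facts hR
  obtain ⟨-, hR'v, -⟩ := concat_reduced_facts hR'
  rw [dprop_concat] at hx ⊢
  rcases hx with hx | hx
  · exact Or.inl (IH _ (by omega) _ _ hRv hR'v x hx)
  · exact Or.inr (IH _ (by omega) _ _ hRv hR'v _ hx)

lemma braid_words (w : Equiv.Perm (Fin n)) {k : ℕ} (hk1 : 1 ≤ k) (hk2 : k + 1 < n)
    (hvk : w ⟨k, by omega⟩ < w ⟨k - 1, by omega⟩)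
    (hvk1 : w ⟨k + 1, hk2⟩ < w ⟨k, by omega⟩) :
    ∃ U, IsReducedWordFor n (U ++ [k, k + 1, k]) w ∧
      IsReducedWordFor n (U ++ [k + 1, k, k + 1]) w := by
  have hk2' : k < n := by omega
  have hd1 : len (w * sTr n k) + 1 = len w := (descent_iff_values hk1 hk2' w).mpr hvk
  set w1 := w * sTr n k with hw1
  have hw1f : w1 ⟨k + 1, hk2⟩ = w ⟨k + 1, hk2⟩ := by
    rw [hw1, Equiv.Perm.mul_apply,
      sTr_apply_fix _ (show k + 1 ≠ k - 1 by omega) (show k + 1 ≠ k by omega)]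
  have hw1e : w1 ⟨k, hk2'⟩ = w ⟨k - 1, by omega⟩ := by
    rw [hw1, Equiv.Perm.mul_apply, sTr_apply_hi hk1 hk2']
  have hd2 : len (w1 * sTr n (k + 1)) + 1 = len w1 := by
    apply (descent_iff_values (by omega) hk2 w1).mpr
    have he : (⟨k + 1 - 1, by omega⟩ : Fin n) = (⟨k, hk2'⟩ : Fin n) := by simp
    rw [he, hw1f, hw1e]
    exact lt_trans hvk1 hvk
  set w2 := w1 * sTr n (k + 1) with hw2
  have hw2d : w2 ⟨k - 1, by omega⟩ = w ⟨k, hk2'⟩ := by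
    rw [hw2, Equiv.Perm.mul_apply,
      sTr_apply_fix _ (show k - 1 ≠ k + 1 - 1 by omega) (show k - 1 ≠ k + 1 by omega),
      hw1, Equiv.Perm.mul_apply, sTr_apply_lo hk1 hk2']
  have hw2e : w2 ⟨k, hk2'⟩ = w ⟨k + 1, hk2⟩ := by
    have he : sTr n (k + 1) ⟨k, hk2'⟩ = ⟨k + 1, hk2⟩ := by
      have h0 := sTr_apply_lo (i := k + 1) (by omega) hk2
      have he2 : (⟨k + 1 - 1, by omega⟩ : Fin n) = (⟨k, hk2'⟩ : Fin n) := by simp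
      rw [he2] at h0
      exact h0
    rw [hw2, Equiv.Perm.mul_apply, he, hw1, Equiv.Perm.mul_apply,
      sTr_apply_fix _ (show k + 1 ≠ k - 1 by omega) (show k + 1 ≠ k by omega)]
  have hd3 : len (w2 * sTr n k) + 1 = len w2 := by
    apply (descent_iff_values hk1 hk2' w2).mpr
    rw [hw2e, hw2d]
    exact hvk1
  set v := w2 * sTr n k with hv
  obtain ⟨U, hU⟩ := exists_reduced_word v
  have hlen : len w = len v + 3 := by omega
  have hc1 : v * sTr n k = w2 := by rw [hv]; exact mul_sTr_sTr_cancel w2 k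
  have hc2 : w2 * sTr n (k + 1) = w1 := by rw [hw2]; exact mul_sTr_sTr_cancel w1 (k + 1)
  have hc3 : w1 * sTr n k = w := by rw [hw1]; exact mul_sTr_sTr_cancel w k
  have halph : Alphabet n [k, k + 1, k] := by
    intro a ha
    simp only [List.mem_cons, List.not_mem_nil, or_false] at ha
    rcases ha with rfl | rfl | rfl <;> omega
  have halph' : Alphabet n [k + 1, k, k + 1] := by
    intro a ha
    simp only [List.mem_cons, List.not_mem_nil, or_false] at ha
    rcases ha with rfl | rfl | rfl <;> omega
  refine ⟨U, ?_, ?_⟩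
  · apply reduced_for_append hU halph
    · rw [wprod_triple, ← mul_assoc, ← mul_assoc, hc1, hc2, hc3]
    · simp only [List.length_cons, List.length_nil]
      omega
  · apply reduced_for_append hU halph'
    · rw [wprod_triple, ← (sTr_braid hk1 hk2), ← mul_assoc, ← mul_assoc, hc1, hc2, hc3]
    · simp only [List.length_cons, List.length_nil]
      omega

theorem dprop_invariant : ∀ (m : ℕ) (w : Equiv.Perm (Fin n)), len w = m →
    ∀ R R' : List ℕ, IsReducedWordFor n R w → IsReducedWordFor n R' w →
    ∀ x : Equiv.Perm (Fin n), DProp n R x → DProp n R' x := by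
  intro m
  induction m using Nat.strong_induction_on with
  | _ m IH' =>
  intro w hm R R' hR hR' x hx
  have IH : ∀ v : Equiv.Perm (Fin n), len v < len w → ∀ Q Q' : List ℕ,
      IsReducedWordFor n Q v → IsReducedWordFor n Q' v →
      ∀ y : Equiv.Perm (Fin n), DProp n Q y → DProp n Q' y := by
    intro v hv Q Q' hQ hQ' y hy
    exact IH' (len v) (by omega) v rfl Q Q' hQ hQ' y hy
  rcases Nat.eq_zero_or_pos m with rfl | hpos
  · have hR0 : R.length = 0 := by
      have h1 := hR.1.2
      rw [hR.2] at h1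
      omega
    have hR'0 : R'.length = 0 := by
      have h1 := hR'.1.2
      rw [hR'.2] at h1
      omega
    rw [List.length_eq_zero_iff] at hR0 hR'0
    subst hR0; subst hR'0; exact hx
  · have hRne : R ≠ [] := by
      intro hc
      subst hc
      have h1 := hR.1.2
      rw [hR.2] at h1
      simp at h1
      omega
    have hR'ne : R' ≠ [] := by
      intro hc
      subst hc
      have h1 := hR'.1.2
      rw [hR'.2] at h1
      simp at h1
      omega
    obtain ⟨R₀, i, rfl⟩ : ∃ R₀ i, R = R₀ ++ [i] :=
      ⟨R.dropLast, R.getLast hRne, (List.dropLast_append_getLast hRne).symm⟩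
    obtain ⟨R₀', j, rfl⟩ : ∃ R₀' j, R' = R₀' ++ [j] :=
      ⟨R'.dropLast, R'.getLast hR'ne, (List.dropLast_append_getLast hR'ne).symm⟩
    by_cases hij : i = j
    · subst hij
      exact dprop_samelast IH hR hR' x hx
    · obtain ⟨hi, hRv, hdi⟩ := concat_reduced_facts hR
      obtain ⟨hj, hR'v, hdj⟩ := concat_reduced_facts hR'
      have hvi := (descent_iff_values hi.1 hi.2 w).mp hdi
      have hvj := (descent_iff_values hj.1 hj.2 w).mp hdj
      by_cases hcomm : i + 1 < j ∨ j + 1 < i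
      · -- commuting case
        have hscomm : sTr n i * sTr n j = sTr n j * sTr n i := sTr_comm hcomm
        have hfix1 : sTr n i ⟨j - 1, by omega⟩ = ⟨j - 1, by omega⟩ :=
          sTr_apply_fix _ (show j - 1 ≠ i - 1 by omega) (show j - 1 ≠ i by omega)
        have hfix2 : sTr n i ⟨j, hj.2⟩ = ⟨j, hj.2⟩ :=
          sTr_apply_fix _ (show j ≠ i - 1 by omega) (show j ≠ i by omega)
        have hd2 : len (w * sTr n i * sTr n j) + 1 = len (w * sTr n i) := by
          apply (descent_iff_values hj.1 hj.2 _).mpr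
          rw [Equiv.Perm.mul_apply, Equiv.Perm.mul_apply, hfix1, hfix2]
          exact hvj
        obtain ⟨U, hU⟩ := exists_reduced_word (w * sTr n i * sTr n j)
        have hc1 : w * sTr n i * sTr n j * sTr n j = w * sTr n i :=
          mul_sTr_sTr_cancel _ j
        have hc2 : w * sTr n i * sTr n i = w := mul_sTr_sTr_cancel _ i
        have halphji : Alphabet n [j, i] := by
          intro a ha
          simp only [List.mem_cons, List.not_mem_nil, or_false] at ha
          rcases ha with rfl | rfl
          · exact hj
          · exact hi
        have halphij : Alphabet n [i, j] := by
          intro a ha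
          simp only [List.mem_cons, List.not_mem_nil, or_false] at ha
          rcases ha with rfl | rfl
          · exact hi
          · exact hj
        have hA : IsReducedWordFor n (U ++ [j, i]) w := by
          apply reduced_for_append hU halphji
          · rw [wprod_pair, ← mul_assoc, hc1, hc2]
          · simp only [List.length_cons, List.length_nil]
            omega
        have hB : IsReducedWordFor n (U ++ [i, j]) w := by
          apply reduced_for_append hU halphij
          · rw [wprod_pair, ← mul_assoc]
            rw [mul_assoc (w * sTr n i) (sTr n j) (sTr n i), ← hscomm,
                ← mul_assoc (w * sTr n i), hc2]
            exact mul_sTr_sTr_cancel w j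
          · simp only [List.length_cons, List.length_nil]
            omega
        have hA' : IsReducedWordFor n ((U ++ [j]) ++ [i]) w := by
          rwa [List.append_assoc]
        have step1 : DProp n ((U ++ [j]) ++ [i]) x := dprop_samelast IH hR hA' x hx
        have step1' : DProp n (U ++ [j, i]) x := by rwa [List.append_assoc] at step1
        have step2 : DProp n (U ++ [i, j]) x := dprop_comm hscomm.symm x step1'
        have hB' : IsReducedWordFor n ((U ++ [i]) ++ [j]) w := by
          rwa [List.append_assoc]
        have step2' : DProp n ((U ++ [i]) ++ [j]) x := by
          rw [show (U ++ [i]) ++ [j] = U ++ [i, j] by simp]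
          exact step2
        exact dprop_samelast IH hB' hR' x step2'
      · -- braid case
        have hj1 : j = i + 1 ∨ i = j + 1 := by omega
        rcases hj1 with hj1 | hj1
        · subst hj1
          have hcast : (⟨i + 1 - 1, by omega⟩ : Fin n) = (⟨i, hi.2⟩ : Fin n) := by simp
          have hvk1 : w ⟨i + 1, hj.2⟩ < w ⟨i, hi.2⟩ := by
            rw [← hcast]
            exact hvj
          obtain ⟨U, hUA, hUB⟩ := braid_words w hi.1 hj.2 hvi hvk1
          have hA' : IsReducedWordFor n ((U ++ [i, i + 1]) ++ [i]) w := by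
            rw [show (U ++ [i, i + 1]) ++ [i] = U ++ [i, i + 1, i] by simp]
            exact hUA
          have step1 : DProp n ((U ++ [i, i + 1]) ++ [i]) x := dprop_samelast IH hR hA' x hx
          have step1' : DProp n (U ++ [i, i + 1, i]) x := by
            rw [show (U ++ [i, i + 1]) ++ [i] = U ++ [i, i + 1, i] by simp] at step1
            exact step1
          have step2 : DProp n (U ++ [i + 1, i, i + 1]) x :=
            dprop_braid (sTr_braid hi.1 hj.2) x step1'
          have hB' : IsReducedWordFor n ((U ++ [i + 1, i]) ++ [i + 1]) w := by
            rw [show (U ++ [i + 1, i]) ++ [i + 1] = U ++ [i + 1, i, i + 1] by simp]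
            exact hUB
          have step2' : DProp n ((U ++ [i + 1, i]) ++ [i + 1]) x := by
            rw [show (U ++ [i + 1, i]) ++ [i + 1] = U ++ [i + 1, i, i + 1] by simp]
            exact step2
          exact dprop_samelast IH hB' hR' x step2'
        · subst hj1
          have hcast : (⟨j + 1 - 1, by omega⟩ : Fin n) = (⟨j, hj.2⟩ : Fin n) := by simp
          have hvk1 : w ⟨j + 1, hi.2⟩ < w ⟨j, hj.2⟩ := by
            rw [← hcast]
            exact hvi
          obtain ⟨U, hUA, hUB⟩ := braid_words w hj.1 hi.2 hvj hvk1
          have hB' : IsReducedWordFor n ((U ++ [j + 1, j]) ++ [j + 1]) w := by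
            rw [show (U ++ [j + 1, j]) ++ [j + 1] = U ++ [j + 1, j, j + 1] by simp]
            exact hUB
          have step1 : DProp n ((U ++ [j + 1, j]) ++ [j + 1]) x :=
            dprop_samelast IH hR hB' x hx
          have step1' : DProp n (U ++ [j + 1, j, j + 1]) x := by
            rw [show (U ++ [j + 1, j]) ++ [j + 1] = U ++ [j + 1, j, j + 1] by simp] at step1
            exact step1
          have step2 : DProp n (U ++ [j, j + 1, j]) x :=
            dprop_braid (sTr_braid hj.1 hi.2).symm x step1'
          have hA' : IsReducedWordFor n ((U ++ [j, j + 1]) ++ [j]) w := by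
            rw [show (U ++ [j, j + 1]) ++ [j] = U ++ [j, j + 1, j] by simp]
            exact hUA
          have step2' : DProp n ((U ++ [j, j + 1]) ++ [j]) x := by
            rw [show (U ++ [j, j + 1]) ++ [j] = U ++ [j, j + 1, j] by simp]
            exact step2
          exact dprop_samelast IH hA' hR' x step2'



/-- the final assembly -/
lemma dprop_eq_of_reduced {w : Equiv.Perm (Fin n)} {R R' : List ℕ}
    (hR : IsReducedWordFor n R w) (hR' : IsReducedWordFor n R' w)
    (x : Equiv.Perm (Fin n)) (hx : DProp n R x) : DProp n R' x :=
  dprop_invariant (len w) w rfl R R' hR hR' x hx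

/-- Let `R` be a reduced word for `w ∈ S_n`.  For every
`x ∈ S_n`, the weight `wt_R(x)` is a nonzero polynomial iff `x ≤ w` in Bruhat
order; equivalently, iff `x = w(T)` for some subword `T` of `R`.  In
particular, the support of `𝔓_{R,q}` is exactly the Bruhat interval
`{x : x ≤ w}`. -/
theorem wt_ne_zero_iff_bruhat_le
    (n : ℕ) (hn : 2 ≤ n) (R : List ℕ) (w : Equiv.Perm (Fin n))
    (hR : IsReducedWordFor n R w) (x : Equiv.Perm (Fin n)) :
    (wt n R x ≠ 0 ↔ BruhatLe n x w) ∧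
    (wt n R x ≠ 0 ↔ ∃ T : List ℕ, T.Sublist R ∧ wprod n T = x) := by
  have hA : wt n R x ≠ 0 ↔ DProp n R x := wt_ne_zero_iff_dprop R x
  constructor
  · constructor
    · intro h R' hR'
      exact dprop_eq_of_reduced hR hR' x (hA.mp h)
    · intro h
      obtain ⟨T, hT, hTp⟩ := h R hR
      exact hA.mpr ⟨T, hT, hTp⟩
  · exact hA

end BSDist
end

section
/- Let n ≥ 3 and let R and R' be words over the alphabet {1,…,n−1}. Then R and R' are commutation-equivalent if and only if, for every i ∈ {1,…,n−2}, the subsequence of R consisting of all its letters lying in {i, i+1} (taken in order) equals the corresponding subsequence of R'. -/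
open scoped Classical

namespace BSDist

private lemma filter_comm_pair (k i j : ℕ) (hij : i + 1 < j ∨ j + 1 < i) :
    List.filter (fun x => x == k || x == k + 1) [i, j]
      = List.filter (fun x => x == k || x == k + 1) [j, i] := by
  simp only [List.filter, List.filter_nil]
  rcases hbi : ((i == k || i == k + 1) : Bool) <;>
    rcases hbj : ((j == k || j == k + 1) : Bool) <;>
      simp_all [Bool.or_eq_true, beq_iff_eq, Bool.or_eq_false_iff, beq_eq_false_iff_ne] <;>
        omega

private lemma commMove_filter {R R' : List ℕ} (h : CommMove R R') (k : ℕ) :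
    R.filter (fun j => j == k || j == k + 1)
      = R'.filter (fun j => j == k || j == k + 1) := by
  obtain ⟨A, B, i, j, hij, rfl, rfl⟩ := h
  simp only [List.filter_append]
  rw [filter_comm_pair k i j hij]

private lemma commEquiv_cons {a : ℕ} {X Y : List ℕ} (h : CommEquiv X Y) :
    CommEquiv (a :: X) (a :: Y) := by
  induction h with
  | refl => exact Relation.ReflTransGen.refl
  | tail _ step ih =>
      refine ih.tail ?_
      obtain ⟨A, B, i, j, hij, rfl, rfl⟩ := step
      exact ⟨a :: A, B, i, j, hij, rfl, rfl⟩

private lemma move_front {a : ℕ} (D : List ℕ) :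
    ∀ C : List ℕ, (∀ c ∈ C, c + 1 < a ∨ a + 1 < c) →
      CommEquiv (C ++ a :: D) (a :: (C ++ D)) := by
  intro C
  induction C with
  | nil => intro _; exact Relation.ReflTransGen.refl
  | cons c C' ih =>
      intro hC
      have h1 : CommEquiv (c :: (C' ++ a :: D)) (c :: a :: (C' ++ D)) :=
        commEquiv_cons (ih fun x hx => hC x (List.mem_cons_of_mem _ hx))
      have h2 : CommMove (c :: a :: (C' ++ D)) (a :: c :: (C' ++ D)) :=
        ⟨[], C' ++ D, c, a, hC c (List.mem_cons_self), rfl, rfl⟩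
      exact h1.tail h2

private lemma dropWhile_head_false {p : ℕ → Bool} :
    ∀ (l : List ℕ) (b : ℕ) (D : List ℕ), l.dropWhile p = b :: D → p b = false := by
  intro l
  induction l with
  | nil => intro b D h; simp [List.dropWhile] at h
  | cons x xs ih =>
      intro b D h
      rw [List.dropWhile_cons] at h
      by_cases hx : p x = true
      · rw [if_pos hx] at h; exact ih b D h
      · rw [if_neg hx] at h
        obtain ⟨rfl, rfl⟩ : x = b ∧ xs = D := by
          constructor <;> [exact (List.cons.injEq ..).mp h |>.1;
            exact (List.cons.injEq ..).mp h |>.2]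
        simpa using hx

private lemma restr_to_equiv (n : ℕ) (hn : 3 ≤ n) :
    ∀ (R' R : List ℕ), Alphabet n R → Alphabet n R' →
      (∀ i : ℕ, 1 ≤ i → i ≤ n - 2 →
        R.filter (fun j => j == i || j == i + 1)
          = R'.filter (fun j => j == i || j == i + 1)) →
      CommEquiv R R' := by
  intro R'
  induction R' with
  | nil =>
      intro R hR _ H
      cases R with
      | nil => exact Relation.ReflTransGen.refl
      | cons c rest =>
          exfalso
          obtain ⟨hc1, hc2⟩ := hR c (List.mem_cons_self)
          obtain ⟨i, hi1, hi2, hi3⟩ : ∃ i, 1 ≤ i ∧ i ≤ n - 2 ∧ (c = i ∨ c = i + 1) := by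
            by_cases h : c ≤ n - 2
            · exact ⟨c, hc1, h, Or.inl rfl⟩
            · exact ⟨c - 1, by omega, by omega, Or.inr (by omega)⟩
          have := H i hi1 hi2
          have hpc : ((c == i || c == i + 1) : Bool) = true := by
            simp [Bool.or_eq_true, beq_iff_eq]; omega
          rw [List.filter_cons, if_pos hpc] at this
          simp at this
  | cons a T ih =>
      intro R hR hR' H
      obtain ⟨ha1, ha2⟩ := hR' a (List.mem_cons_self)
      set q : ℕ → Bool := fun c => !(c == a || c + 1 == a || c == a + 1) with hq
      have hqiff : ∀ c, q c = true ↔ (c ≠ a ∧ c + 1 ≠ a ∧ c ≠ a + 1) := by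
        intro c
        simp [hq, Bool.or_eq_true, beq_iff_eq]
        tauto
      set C := R.takeWhile q with hC
      set D0 := R.dropWhile q with hD0
      have hRsplit : R = C ++ D0 := (List.takeWhile_append_dropWhile ..).symm
      have hCgood : ∀ c ∈ C, c ≠ a ∧ c + 1 ≠ a ∧ c ≠ a + 1 := by
        intro c hc
        exact (hqiff c).mp (List.mem_takeWhile_imp hc)
      -- For an index i with a ∈ {i, i+1}, the filter of C is empty.
      have hfiltC : ∀ i : ℕ, (a = i ∨ a = i + 1) →
          C.filter (fun j => j == i || j == i + 1) = [] := by
        intro i hi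
        rw [List.filter_eq_nil_iff]
        intro c hc
        obtain ⟨h1, h2, h3⟩ := hCgood c hc
        simp [Bool.or_eq_true, beq_iff_eq]
        omega
      cases hD0e : D0 with
      | nil =>
          exfalso
          obtain ⟨i, hi1, hi2, hi3⟩ : ∃ i, 1 ≤ i ∧ i ≤ n - 2 ∧ (a = i ∨ a = i + 1) := by
            by_cases h : a ≤ n - 2
            · exact ⟨a, ha1, h, Or.inl rfl⟩
            · exact ⟨a - 1, by omega, by omega, Or.inr (by omega)⟩
          have hH := H i hi1 hi2
          rw [hRsplit, hD0e, List.append_nil, hfiltC i hi3] at hH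
          have hpa : ((a == i || a == i + 1) : Bool) = true := by
            simp [Bool.or_eq_true, beq_iff_eq]; omega
          rw [List.filter_cons, if_pos hpa] at hH
          simp at hH
      | cons b D =>
          have hbq : q b = false := dropWhile_head_false R b D (by rw [← hD0, hD0e])
          have hbconf : b = a ∨ b + 1 = a ∨ b = a + 1 := by
            by_contra hcon
            push_neg at hcon
            have := (hqiff b).mpr ⟨hcon.1, hcon.2.1, hcon.2.2⟩
            rw [hbq] at this; exact absurd this (by simp)
          have hRsplit' : R = C ++ b :: D := by rw [hRsplit, hD0e]
          have hbR : b ∈ R := by rw [hRsplit']; simp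
          obtain ⟨hb1, hb2⟩ := hR b hbR
          have hba : b = a := by
            by_contra hba
            obtain ⟨i, hi1, hi2, hia, hib⟩ :
                ∃ i, 1 ≤ i ∧ i ≤ n - 2 ∧ (a = i ∨ a = i + 1) ∧ (b = i ∨ b = i + 1) := by
              refine ⟨min a b, by omega, by omega, by omega, by omega⟩
            have hH := H i hi1 hi2
            rw [hRsplit', List.filter_append, hfiltC i hia] at hH
            have hpb : ((b == i || b == i + 1) : Bool) = true := by
              simp [Bool.or_eq_true, beq_iff_eq]; omega
            have hpa : ((a == i || a == i + 1) : Bool) = true := by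
              simp [Bool.or_eq_true, beq_iff_eq]; omega
            rw [List.filter_cons, if_pos hpb, List.filter_cons, if_pos hpa] at hH
            simp only [List.nil_append, List.cons.injEq] at hH
            exact hba hH.1
          subst hba
          -- now R = C ++ b :: D with b playing the role of a
          have hmove : CommEquiv R (b :: (C ++ D)) := by
            rw [hRsplit']
            refine move_front D C ?_
            intro c hc
            obtain ⟨h1, h2, h3⟩ := hCgood c hc
            omega
          have hCD : Alphabet n (C ++ D) := by
            intro c hc
            refine hR c ?_
            rw [hRsplit']
            rcases List.mem_append.mp hc with h | h
            · exact List.mem_append.mpr (Or.inl h)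
            · exact List.mem_append.mpr (Or.inr (List.mem_cons_of_mem _ h))
          have hT : Alphabet n T := fun c hc => hR' c (List.mem_cons_of_mem _ hc)
          have Hnew : ∀ i : ℕ, 1 ≤ i → i ≤ n - 2 →
              (C ++ D).filter (fun j => j == i || j == i + 1)
                = T.filter (fun j => j == i || j == i + 1) := by
            intro i hi1 hi2
            have hH := H i hi1 hi2
            rw [hRsplit', List.filter_append] at hH
            rw [List.filter_append]
            by_cases hpb : ((b == i || b == i + 1) : Bool) = true
            · have hbii : b = i ∨ b = i + 1 := by
                simpa [Bool.or_eq_true, beq_iff_eq] using hpb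
              rw [hfiltC i hbii] at hH ⊢
              rw [List.filter_cons, if_pos hpb, List.filter_cons, if_pos hpb] at hH
              simp only [List.nil_append, List.cons.injEq] at hH ⊢
              exact hH.2
            · rw [List.filter_cons, if_neg hpb, List.filter_cons, if_neg hpb] at hH
              exact hH
          have hrec : CommEquiv (C ++ D) T := ih (C ++ D) hCD hT Hnew
          exact hmove.trans (commEquiv_cons hrec)

/-- For `n ≥ 3` and words `R, R'` over the alphabet
`{1,…,n−1}`: `R` and `R'` are commutation-equivalent iff for every
`i ∈ {1,…,n−2}` the subsequence of `R` consisting of its letters lying in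
`{i, i+1}` equals the corresponding subsequence of `R'`. -/
theorem commEquiv_iff_restrictions_eq
    (n : ℕ) (hn : 3 ≤ n) (R R' : List ℕ)
    (hR : Alphabet n R) (hR' : Alphabet n R') :
    CommEquiv R R' ↔
      ∀ i : ℕ, 1 ≤ i → i ≤ n - 2 →
        R.filter (fun j => j == i || j == i + 1)
          = R'.filter (fun j => j == i || j == i + 1) := by
  constructor
  · intro h i hi1 hi2
    clear hR hR'
    induction h with
    | refl => rfl
    | tail _ step ihh => rw [ihh, commMove_filter step i]
  · intro H
    exact restr_to_equiv n hn R' R hR hR' (fun i h1 h2 => H i h1 h2)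

end BSDist
end
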